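/- Let α > −1 with α ≠ 0 and let B₁, B₂ ∈ ℝ. There exists a constant C > 0, depending only on α, B₁, B₂, such that for every ε ∈ (0,1) there is a twice continuously differentiable function c : (0, ε^{−1}) → ℝ satisfying c''(r) + c'(r)/r + 8(1+α)² r^{2α}(1+r^{2+2α})^{−2} c(r) = −ε² r^{2α}(1+r^{2+2α})^{−2}·(B₁ r² + B₂·(4(1+α)² g_α(r)² + g_α(r)·r)) for all 0 < r < ε^{−1}, with lim_{r→0⁺} c(r) = 0, lim_{r→0⁺} c'(r) = 0, and |c(r)| ≤ C·ε²·(1 + (1+r)^{−2α})·log(2+r) for all 0 < r < ε^{−1}. -/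

import Mathlib

open Filter Topology

/-- `g_α(r) = -r/(4α(1+α)(1+r^{2+2α}))`. -/
noncomputable def gfun (α r : ℝ) : ℝ :=
  -r / (4 * α * (1 + α) * (1 + r ^ (2 + 2 * α)))

/-!
Write `s = 2 + 2α`. The homogeneous equation `c'' + c'/r + V c = 0`, `V = 2s²r^(s-2)/(1+r^s)²`,
has the solutions `z₀ = (1 - r^s)/(1 + r^s) = 1 + r ∂ᵣU_α / s`, coming from the dilation invariance
of the bubble, and `z₁ = (s log r + 2) z₀ + 2`, with Wronskian `z₁'z₀ - z₀'z₁ = s/r`. Variation of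
parameters gives the solution `c = (z₁ ∫₀^r t z₀ f - z₀ ∫₀^r t z₁ f) / s` on all of `(0, ∞)`.

The forcing satisfies `|f| ≤ K ε² r^s/(1+r^s)²`, which is `O(r^s)` at `0` and `O(r^(-s))` at
infinity. Near `0` the two integrals are `O(r²)` and `O(r)`, so `c` and `c'` tend to `0`. For
`r ≥ 1` they grow at most like `∫₁^r t^(1-s) dt ≲ 1 + r^(2-s)`, the second one with an extra factor
`log r`; this step needs `s ≠ 2`, i.e. `α ≠ 0`. As `|z₁| ≲ log (2 + r)` and `2 - s = -2α`, this
is the claimed bound.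
-/

open Real Set

noncomputable section

namespace LinearizedLiouville

variable {s r t : ℝ}

lemma contDiffOn_two_of_hasDerivAt {𝕜 F : Type*} [NontriviallyNormedField 𝕜]
    [NormedAddCommGroup F] [NormedSpace 𝕜 F] {f f' f'' : 𝕜 → F} {U : Set 𝕜} (hU : IsOpen U)
    (hf : ∀ x ∈ U, HasDerivAt f (f' x) x) (hf' : ∀ x ∈ U, HasDerivAt f' (f'' x) x)
    (hf'' : ContinuousOn f'' U) : ContDiffOn 𝕜 2 f U := by
  have hderiv : EqOn (deriv f) f' U := fun x hx => (hf x hx).deriv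
  rw [show (2 : WithTop ℕ∞) = 1 + 1 from rfl, contDiffOn_succ_iff_deriv_of_isOpen hU]
  refine ⟨fun x hx => (hf x hx).differentiableAt.differentiableWithinAt, by simp, ?_⟩
  refine ContDiffOn.congr ?_ hderiv
  rw [show (1 : WithTop ℕ∞) = 0 + 1 from rfl, contDiffOn_succ_iff_deriv_of_isOpen hU]
  refine ⟨fun x hx => (hf' x hx).differentiableAt.differentiableWithinAt, by simp, ?_⟩
  exact contDiffOn_zero.mpr (hf''.congr fun x hx => (hf' x hx).deriv)

lemma intervalIntegrable_of_continuousOn_Ici {E : Type*} [NormedAddCommGroup E] {g : ℝ → E}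
    {a b c : ℝ} (hg : ContinuousOn g (Ici c)) (ha : c ≤ a) (hb : c ≤ b) :
    IntervalIntegrable g MeasureTheory.volume a b :=
  (hg.mono fun _ ht => (le_min ha hb).trans ht.1).intervalIntegrable

lemma hasDerivAt_integral_of_continuousOn_Ici {E : Type*} [NormedAddCommGroup E]
    [NormedSpace ℝ E] [CompleteSpace E] {g : ℝ → E} {a c : ℝ} (hg : ContinuousOn g (Ici c))
    (ha : c ≤ a) (hr : c < r) : HasDerivAt (fun x => ∫ t in a..x, g t) (g r) r :=
  intervalIntegral.integral_hasDerivAt_right (intervalIntegrable_of_continuousOn_Ici hg ha hr.le)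
    ((hg.mono Ioi_subset_Ici_self).stronglyMeasurableAtFilter isOpen_Ioi r hr)
    (hg.continuousAt (Ici_mem_nhds hr))

lemma mul_abs_log_le_one (ht₀ : 0 < t) (ht₁ : t ≤ 1) : t * |log t| ≤ 1 := by
  have h := abs_log_mul_self_lt t ht₀ ht₁
  rw [abs_mul, abs_of_pos ht₀] at h
  linarith

lemma one_le_log_two_add (hr : 1 ≤ r) : 1 ≤ log (2 + r) := by
  rw [le_log_iff_exp_le (by linarith)]
  linarith [exp_one_lt_d9]

lemma one_add_rpow_pos (hr : 0 ≤ r) : 0 < 1 + r ^ s := by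
  have := rpow_nonneg hr s; linarith

lemma self_mul_rpow_neg (ht : 0 < t) : t * t ^ (-s) = t ^ (1 - s) := by
  rw [sub_eq_add_neg, rpow_add ht, rpow_one]

lemma one_add_rpow_le_two_mul (p : ℝ) (hr : 1 ≤ r) :
    1 + r ^ p ≤ 2 * (1 + (1 + r) ^ p) := by
  have h := rpow_pos_of_pos (by linarith : (0 : ℝ) < 1 + r) p
  rcases le_or_gt 0 p with hp | hp
  · linarith [rpow_le_rpow (by linarith) (by linarith : r ≤ 1 + r) hp]
  · linarith [rpow_le_one_of_one_le_of_nonpos hr hp.le]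

lemma hasDerivAt_rpow_div (hr : 0 < r) : HasDerivAt (fun t => t ^ s) (s * r ^ s / r) r := by
  simpa [mul_div_assoc, rpow_sub_one hr.ne'] using hasDerivAt_rpow_const (p := s) (Or.inl hr.ne')

lemma integral_rpow_one_sub (hs₂ : s ≠ 2) (hr : 1 ≤ r) :
    ∫ t in (1 : ℝ)..r, t ^ (1 - s) = (r ^ (2 - s) - 1) / (2 - s) := by
  rw [integral_rpow (Or.inr ⟨fun h => hs₂ (by linarith), fun h => ?_⟩), one_rpow]
  · ring_nf
  · rw [uIcc_of_le hr] at h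
    linarith [h.1]

lemma abs_integral_le_of_abs_le_rpow {g : ℝ → ℝ} {M : ℝ} (hs₂ : s ≠ 2) (hM : 0 ≤ M)
    (hr : 1 ≤ r) (hg : ∀ t ∈ Ioc 1 r, |g t| ≤ M * t ^ (1 - s)) :
    |∫ t in (1 : ℝ)..r, g t| ≤ M * ((1 + r ^ (2 - s)) / |2 - s|) := by
  have hcont : ContinuousOn (fun t : ℝ => M * t ^ (1 - s)) (uIcc 1 r) := fun t ht =>
    ((continuousAt_rpow_const t _ (Or.inl (by rw [uIcc_of_le hr] at ht; linarith [ht.1]))).const_mul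
      M).continuousWithinAt
  have h := intervalIntegral.norm_integral_le_of_norm_le (f := g) (μ := MeasureTheory.volume) hr
    (MeasureTheory.ae_of_all _ hg) hcont.intervalIntegrable
  rw [intervalIntegral.integral_const_mul, integral_rpow_one_sub hs₂ hr] at h
  refine h.trans (mul_le_mul_of_nonneg_left ((le_abs_self _).trans ?_) hM)
  rw [abs_div]
  gcongr
  have := rpow_nonneg (zero_le_one.trans hr) (2 - s)
  rw [abs_le]
  constructor <;> linarith

/-! ### Homogeneous solutions -/

def potential (s r : ℝ) : ℝ := 2 * s ^ 2 * r ^ s / (r ^ 2 * (1 + r ^ s) ^ 2)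

def z₀ (s r : ℝ) : ℝ := (1 - r ^ s) / (1 + r ^ s)

def z₀' (s r : ℝ) : ℝ := -2 * s * r ^ s / (r * (1 + r ^ s) ^ 2)

def z₀'' (s r : ℝ) : ℝ :=
  -2 * s * (s - 1) * r ^ s / (r ^ 2 * (1 + r ^ s) ^ 2)
    + 4 * s ^ 2 * (r ^ s) ^ 2 / (r ^ 2 * (1 + r ^ s) ^ 3)

def z₁ (s r : ℝ) : ℝ := (s * log r + 2) * z₀ s r + 2

def z₁' (s r : ℝ) : ℝ := s * z₀ s r / r + (s * log r + 2) * z₀' s r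

def z₁'' (s r : ℝ) : ℝ :=
  -(s * z₀ s r / r ^ 2) + 2 * s * z₀' s r / r + (s * log r + 2) * z₀'' s r

lemma hasDerivAt_z₀ (hr : 0 < r) : HasDerivAt (z₀ s) (z₀' s r) r := by
  have hw := (one_add_rpow_pos (s := s) hr.le).ne'
  refine (((hasDerivAt_rpow_div hr).const_sub 1).div ((hasDerivAt_rpow_div hr).const_add 1)
    hw).congr_deriv ?_
  unfold z₀'
  field_simp
  ring

lemma hasDerivAt_z₀' (hr : 0 < r) : HasDerivAt (z₀' s) (z₀'' s r) r := by
  have hw := (one_add_rpow_pos (s := s) hr.le).ne'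
  have hden : HasDerivAt (fun t => t * (1 + t ^ s) ^ 2)
      (1 * (1 + r ^ s) ^ 2 + r * (2 * (1 + r ^ s) * (s * r ^ s / r))) r := by
    simpa using (hasDerivAt_id' r).fun_mul (((hasDerivAt_rpow_div hr).const_add 1).fun_pow 2)
  refine (((hasDerivAt_rpow_div hr).const_mul (-2 * s)).div hden (by positivity)).congr_deriv ?_
  unfold z₀''
  field_simp
  ring

lemma hasDerivAt_z₁ (hr : 0 < r) : HasDerivAt (z₁ s) (z₁' s r) r := by
  refine ((((hasDerivAt_log hr.ne').const_mul s).add_const 2).mul (hasDerivAt_z₀ hr)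
    |>.add_const 2).congr_deriv ?_
  unfold z₁'
  ring

lemma hasDerivAt_z₁' (hr : 0 < r) : HasDerivAt (z₁' s) (z₁'' s r) r := by
  refine ((((hasDerivAt_z₀ hr).const_mul s).div (hasDerivAt_id r) hr.ne').add
    ((((hasDerivAt_log hr.ne').const_mul s).add_const 2).mul (hasDerivAt_z₀' hr))).congr_deriv ?_
  simp only [id]
  unfold z₁''
  field_simp
  ring

lemma z₀'_div_add_potential (hr : 0 < r) : s * z₀' s r / r + potential s r = 0 := by
  unfold z₀' potential
  have hw := (one_add_rpow_pos (s := s) hr.le).ne'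
  field_simp
  ring

lemma z₀_ode (hr : 0 < r) : z₀'' s r + z₀' s r / r + potential s r * z₀ s r = 0 := by
  have hw := (one_add_rpow_pos (s := s) hr.le).ne'
  unfold z₀'' z₀' potential z₀
  field_simp
  ring

lemma z₁_ode (hr : 0 < r) : z₁'' s r + z₁' s r / r + potential s r * z₁ s r = 0 := by
  have h := z₀_ode (s := s) hr
  have h' := z₀'_div_add_potential (s := s) hr
  unfold z₁'' z₁' z₁
  linear_combination (s * log r + 2) * h + 2 * h'

lemma wronskian_z₀_z₁ (hr : 0 < r) : z₁' s r * z₀ s r - z₀' s r * z₁ s r = s / r := by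
  have hw := (one_add_rpow_pos (s := s) hr.le).ne'
  unfold z₁' z₁ z₀' z₀
  field_simp
  ring

lemma continuousOn_z₀ (hs : 0 < s) : ContinuousOn (z₀ s) (Ici 0) := by
  have := continuous_rpow_const hs.le
  exact ContinuousOn.div (by fun_prop) (by fun_prop) fun t ht => (one_add_rpow_pos ht).ne'

lemma continuousOn_mul_z₁ (hs : 0 < s) : ContinuousOn (fun t => t * z₁ s t) (Ici 0) := by
  have hz₀ := continuousOn_z₀ hs
  have hlog := continuous_mul_log
  have : (fun t => t * z₁ s t) = fun t => (s * (t * log t) + 2 * t) * z₀ s t + 2 * t := by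
    ext t; unfold z₁; ring
  rw [this]
  fun_prop

lemma continuousOn_potential (hs : 0 < s) : ContinuousOn (potential s) (Ioi 0) := by
  have := continuous_rpow_const hs.le
  refine ContinuousOn.div (by fun_prop) (by fun_prop) fun r (hr : 0 < r) => ?_
  have := one_add_rpow_pos (s := s) hr.le
  positivity

/-! ### Variation of parameters -/

variable {f : ℝ → ℝ}

def I₀ (s : ℝ) (f : ℝ → ℝ) (r : ℝ) : ℝ := ∫ t in (0 : ℝ)..r, t * z₀ s t * f t

def I₁ (s : ℝ) (f : ℝ → ℝ) (r : ℝ) : ℝ := ∫ t in (0 : ℝ)..r, t * z₁ s t * f t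

def sol (s : ℝ) (f : ℝ → ℝ) (r : ℝ) : ℝ := (z₁ s r * I₀ s f r - z₀ s r * I₁ s f r) / s

def sol' (s : ℝ) (f : ℝ → ℝ) (r : ℝ) : ℝ := (z₁' s r * I₀ s f r - z₀' s r * I₁ s f r) / s

lemma continuousOn_integrand₀ (hs : 0 < s) (hf : ContinuousOn f (Ici 0)) :
    ContinuousOn (fun t => t * z₀ s t * f t) (Ici 0) :=
  (continuousOn_id.mul (continuousOn_z₀ hs)).mul hf

lemma continuousOn_integrand₁ (hs : 0 < s) (hf : ContinuousOn f (Ici 0)) :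
    ContinuousOn (fun t => t * z₁ s t * f t) (Ici 0) :=
  (continuousOn_mul_z₁ hs).mul hf

lemma hasDerivAt_I₀ (hs : 0 < s) (hf : ContinuousOn f (Ici 0)) (hr : 0 < r) :
    HasDerivAt (I₀ s f) (r * z₀ s r * f r) r :=
  hasDerivAt_integral_of_continuousOn_Ici (continuousOn_integrand₀ hs hf) le_rfl hr

lemma hasDerivAt_I₁ (hs : 0 < s) (hf : ContinuousOn f (Ici 0)) (hr : 0 < r) :
    HasDerivAt (I₁ s f) (r * z₁ s r * f r) r :=
  hasDerivAt_integral_of_continuousOn_Ici (continuousOn_integrand₁ hs hf) le_rfl hr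

lemma hasDerivAt_sol (hs : 0 < s) (hf : ContinuousOn f (Ici 0)) (hr : 0 < r) :
    HasDerivAt (sol s f) (sol' s f r) r := by
  refine ((((hasDerivAt_z₁ hr).mul (hasDerivAt_I₀ hs hf hr)).sub
    ((hasDerivAt_z₀ hr).mul (hasDerivAt_I₁ hs hf hr))).div_const s).congr_deriv ?_
  unfold sol'
  ring

lemma hasDerivAt_sol' (hs : 0 < s) (hf : ContinuousOn f (Ici 0)) (hr : 0 < r) :
    HasDerivAt (sol' s f) (f r - sol' s f r / r - potential s r * sol s f r) r := by
  refine ((((hasDerivAt_z₁' hr).mul (hasDerivAt_I₀ hs hf hr)).sub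
    ((hasDerivAt_z₀' hr).mul (hasDerivAt_I₁ hs hf hr))).div_const s).congr_deriv ?_
  have h₀ := z₀_ode (s := s) hr
  have h₁ := z₁_ode (s := s) hr
  have hW := wronskian_z₀_z₁ (s := s) hr
  have := hs.ne'
  have := hr.ne'
  unfold sol sol'
  -- the homogeneous equations absorb the `I₀`, `I₁` terms and the Wronskian turns the rest into `f`
  linear_combination (norm := skip) (I₀ s f r / s) * h₁ - (I₁ s f r / s) * h₀ + (r * f r / s) * hW
  field_simp
  ring

theorem sol_ode (hs : 0 < s) (hf : ContinuousOn f (Ici 0)) (hr : 0 < r) :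
    deriv (deriv (sol s f)) r + deriv (sol s f) r / r + potential s r * sol s f r = f r := by
  have hderiv : deriv (sol s f) =ᶠ[𝓝 r] sol' s f :=
    eventually_of_mem (Ioi_mem_nhds hr) fun x hx => (hasDerivAt_sol hs hf hx).deriv
  rw [hderiv.deriv_eq, hderiv.eq_of_nhds, (hasDerivAt_sol' hs hf hr).deriv]
  ring

theorem contDiffOn_sol (hs : 0 < s) (hf : ContinuousOn f (Ici 0)) :
    ContDiffOn ℝ 2 (sol s f) (Ioi 0) := by
  have hsol : ContinuousOn (sol s f) (Ioi 0) :=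
    fun x hx => (hasDerivAt_sol hs hf hx).continuousAt.continuousWithinAt
  have hsol' : ContinuousOn (sol' s f) (Ioi 0) :=
    fun x hx => (hasDerivAt_sol' hs hf hx).continuousAt.continuousWithinAt
  refine contDiffOn_two_of_hasDerivAt isOpen_Ioi (fun x hx => hasDerivAt_sol hs hf hx)
    (fun x hx => hasDerivAt_sol' hs hf hx) ?_
  exact ((hf.mono Ioi_subset_Ici_self).sub (hsol'.div continuousOn_id fun x hx => ne_of_gt hx)).sub
    ((continuousOn_potential hs).mul hsol)

/-! ### Estimates -/

/-- For `s = 2 + 2α` this is `t² · t^(2α) ρ_α(t)`. -/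
def bubbleWeight (s t : ℝ) : ℝ := t ^ s / (1 + t ^ s) ^ 2

lemma bubbleWeight_le_one (ht : 0 ≤ t) : bubbleWeight s t ≤ 1 := by
  have h := rpow_nonneg ht s
  rw [bubbleWeight, div_le_one (by positivity)]
  nlinarith

lemma bubbleWeight_le_rpow_neg (ht : 0 < t) : bubbleWeight s t ≤ t ^ (-s) := by
  have h := rpow_pos_of_pos ht s
  rw [bubbleWeight, rpow_neg ht.le, div_le_iff₀ (by positivity)]
  field_simp
  nlinarith

lemma abs_z₀_le_one (ht : 0 ≤ t) : |z₀ s t| ≤ 1 := by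
  have h := rpow_nonneg ht s
  rw [z₀, abs_div, abs_of_pos (one_add_rpow_pos ht), div_le_one (one_add_rpow_pos ht), abs_le]
  constructor <;> linarith

lemma abs_z₁_le (hs : 0 ≤ s) (ht : 0 ≤ t) : |z₁ s t| ≤ s * |log t| + 4 := by
  calc |z₁ s t| ≤ |s * log t + 2| * |z₀ s t| + 2 := by
        rw [z₁, ← abs_mul]; exact (abs_add_le _ _).trans (by norm_num)
    _ ≤ (s * |log t| + 2) * 1 + 2 := by
        gcongr
        · exact (abs_add_le _ _).trans (by rw [abs_mul, abs_of_nonneg hs]; norm_num)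
        · exact abs_z₀_le_one ht
    _ = s * |log t| + 4 := by ring

lemma abs_z₀'_le (hs : 0 ≤ s) (ht : 0 < t) : |z₀' s t| ≤ 2 * s * t ^ s / t := by
  have h := rpow_nonneg ht.le s
  have hw : 1 ≤ (1 + t ^ s) ^ 2 := one_le_pow₀ (by linarith)
  rw [z₀', neg_mul, neg_mul, neg_div, abs_neg, abs_div, abs_of_nonneg (by positivity),
    abs_of_pos (by positivity)]
  exact div_le_div_of_nonneg_left (by positivity) ht (le_mul_of_one_le_right ht.le hw)

lemma abs_z₁'_le (hs : 0 ≤ s) (ht : 0 < t) :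
    |z₁' s t| ≤ s / t + (s * |log t| + 2) * (2 * s * t ^ s / t) := by
  calc |z₁' s t| ≤ |s * z₀ s t / t| + |s * log t + 2| * |z₀' s t| := by
        rw [z₁', ← abs_mul]; exact abs_add_le _ _
    _ ≤ s / t + (s * |log t| + 2) * (2 * s * t ^ s / t) := by
        gcongr
        · rw [abs_div, abs_mul, abs_of_nonneg hs, abs_of_pos ht]
          gcongr
          exact mul_le_of_le_one_right hs (abs_z₀_le_one ht.le)
        · exact (abs_add_le _ _).trans (by rw [abs_mul, abs_of_nonneg hs]; norm_num)
        · exact abs_z₀'_le hs ht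

lemma abs_sol_le_div (hs : 0 < s) (hr : 0 ≤ r) :
    |sol s f r| ≤ (|z₁ s r| * |I₀ s f r| + |I₁ s f r|) / s := by
  rw [sol, abs_div, abs_of_pos hs]
  gcongr
  refine (abs_sub _ _).trans ?_
  rw [abs_mul, abs_mul]
  gcongr
  exact mul_le_of_le_one_left (abs_nonneg _) (abs_z₀_le_one hr)

lemma abs_sol'_le_div (hs : 0 < s) :
    |sol' s f r| ≤ (|z₁' s r| * |I₀ s f r| + |z₀' s r| * |I₁ s f r|) / s := by
  rw [sol', abs_div, abs_of_pos hs, ← abs_mul, ← abs_mul]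
  gcongr
  exact abs_sub _ _

variable {K : ℝ}

lemma nonneg_of_abs_le_mul_bubbleWeight (hfK : ∀ t, 0 ≤ t → |f t| ≤ K * bubbleWeight s t) :
    0 ≤ K := by
  have h := hfK 1 zero_le_one
  rw [bubbleWeight, one_rpow] at h
  linarith [abs_nonneg (f 1)]

lemma abs_I₀_le (hfK : ∀ t, 0 ≤ t → |f t| ≤ K * bubbleWeight s t)
    (hr₀ : 0 < r) : |I₀ s f r| ≤ K * r ^ 2 := by
  have hK := nonneg_of_abs_le_mul_bubbleWeight hfK
  have h := intervalIntegral.norm_integral_le_of_norm_le_const (a := 0) (b := r) (C := K * r)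
    (f := fun t => t * z₀ s t * f t) fun t ht => ?_
  · rwa [sub_zero, abs_of_pos hr₀, mul_assoc, ← sq] at h
  obtain ⟨ht₀, htr⟩ : t ∈ Ioc 0 r := by rwa [uIoc_of_le hr₀.le] at ht
  calc ‖t * z₀ s t * f t‖ = t * |z₀ s t| * |f t| := by
        rw [Real.norm_eq_abs, abs_mul, abs_mul, abs_of_pos ht₀]
    _ ≤ r * 1 * (K * 1) := by
        gcongr
        · exact abs_z₀_le_one ht₀.le
        · exact (hfK t ht₀.le).trans
            (mul_le_mul_of_nonneg_left (bubbleWeight_le_one ht₀.le) hK)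
    _ = K * r := by ring

lemma abs_I₁_le_of_le_one (hs : 0 < s) (hfK : ∀ t, 0 ≤ t → |f t| ≤ K * bubbleWeight s t)
    (hr₀ : 0 < r) (hr₁ : r ≤ 1) : |I₁ s f r| ≤ K * (s + 4) * r := by
  have hK := nonneg_of_abs_le_mul_bubbleWeight hfK
  have h := intervalIntegral.norm_integral_le_of_norm_le_const (a := 0) (b := r)
    (C := K * (s + 4)) (f := fun t => t * z₁ s t * f t) fun t ht => ?_
  · rwa [sub_zero, abs_of_pos hr₀] at h
  obtain ⟨ht₀, htr⟩ : t ∈ Ioc 0 r := by rwa [uIoc_of_le hr₀.le] at ht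
  calc ‖t * z₁ s t * f t‖ = (t * |z₁ s t|) * |f t| := by
        rw [Real.norm_eq_abs, abs_mul, abs_mul, abs_of_pos ht₀]
    _ ≤ (t * (s * |log t| + 4)) * (K * 1) := by
        gcongr
        · exact abs_z₁_le hs.le ht₀.le
        · exact (hfK t ht₀.le).trans
            (mul_le_mul_of_nonneg_left (bubbleWeight_le_one ht₀.le) hK)
    _ = (s * (t * |log t|) + 4 * t) * K := by ring
    _ ≤ (s * 1 + 4 * 1) * K := by
        gcongr
        · exact mul_abs_log_le_one ht₀ (htr.trans hr₁)
        · exact htr.trans hr₁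
    _ = K * (s + 4) := by ring

lemma abs_sol_le_of_le_one (hs : 0 < s)
    (hfK : ∀ t, 0 ≤ t → |f t| ≤ K * bubbleWeight s t) (hr₀ : 0 < r) (hr₁ : r ≤ 1) :
    |sol s f r| ≤ 2 * K * (s + 4) / s * r := by
  have hK := nonneg_of_abs_le_mul_bubbleWeight hfK
  have hlog := mul_abs_log_le_one hr₀ hr₁
  calc |sol s f r| ≤ (|z₁ s r| * |I₀ s f r| + |I₁ s f r|) / s := abs_sol_le_div hs hr₀.le
    _ ≤ ((s * |log r| + 4) * (K * r ^ 2) + K * (s + 4) * r) / s := by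
        gcongr
        · exact abs_z₁_le hs.le hr₀.le
        · exact abs_I₀_le hfK hr₀
        · exact abs_I₁_le_of_le_one hs hfK hr₀ hr₁
    _ = (K * r * (s * (r * |log r|) + 4 * r) + K * (s + 4) * r) / s := by ring
    _ ≤ (K * r * (s * 1 + 4 * 1) + K * (s + 4) * r) / s := by gcongr
    _ = 2 * K * (s + 4) / s * r := by ring

lemma abs_sol'_le_of_le_one (hs : 0 < s)
    (hfK : ∀ t, 0 ≤ t → |f t| ≤ K * bubbleWeight s t) (hr₀ : 0 < r) (hr₁ : r ≤ 1) :
    |sol' s f r| ≤ K * ((4 * s + 12) * r ^ s + r) := by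
  have hK := nonneg_of_abs_le_mul_bubbleWeight hfK
  have hlog := mul_abs_log_le_one hr₀ hr₁
  have hrs := rpow_nonneg hr₀.le s
  calc |sol' s f r| ≤ (|z₁' s r| * |I₀ s f r| + |z₀' s r| * |I₁ s f r|) / s := abs_sol'_le_div hs
    _ ≤ ((s / r + (s * |log r| + 2) * (2 * s * r ^ s / r)) * (K * r ^ 2)
          + 2 * s * r ^ s / r * (K * (s + 4) * r)) / s := by
        gcongr
        · exact abs_z₁'_le hs.le hr₀
        · exact abs_I₀_le hfK hr₀
        · exact abs_z₀'_le hs.le hr₀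
        · exact abs_I₁_le_of_le_one hs hfK hr₀ hr₁
    _ = K * (r + 2 * r ^ s * (s * (r * |log r|) + 2 * r) + 2 * (s + 4) * r ^ s) := by
        field_simp
    _ ≤ K * (r + 2 * r ^ s * (s * 1 + 2 * 1) + 2 * (s + 4) * r ^ s) := by gcongr
    _ = K * ((4 * s + 12) * r ^ s + r) := by ring

theorem tendsto_sol_zero (hs : 0 < s)
    (hfK : ∀ t, 0 ≤ t → |f t| ≤ K * bubbleWeight s t) :
    Tendsto (sol s f) (𝓝[>] 0) (𝓝 0) := by
  have hlin : Tendsto (fun r => 2 * K * (s + 4) / s * r) (𝓝[>] 0) (𝓝 0) := by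
    simpa using ((continuous_const_mul (2 * K * (s + 4) / s)).tendsto 0).mono_left
      nhdsWithin_le_nhds
  refine squeeze_zero_norm' ?_ hlin
  filter_upwards [Ioc_mem_nhdsGT zero_lt_one] with r hr
  exact abs_sol_le_of_le_one hs hfK hr.1 hr.2

theorem tendsto_deriv_sol_zero (hs : 0 < s) (hf : ContinuousOn f (Ici 0))
    (hfK : ∀ t, 0 ≤ t → |f t| ≤ K * bubbleWeight s t) :
    Tendsto (deriv (sol s f)) (𝓝[>] 0) (𝓝 0) := by
  have hbound : Tendsto (fun r => K * ((4 * s + 12) * r ^ s + r)) (𝓝[>] 0) (𝓝 0) := by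
    have := continuous_rpow_const hs.le
    have hc : Continuous fun r : ℝ => K * ((4 * s + 12) * r ^ s + r) := by fun_prop
    simpa [zero_rpow hs.ne'] using (hc.tendsto 0).mono_left nhdsWithin_le_nhds
  refine squeeze_zero_norm' ?_ hbound
  filter_upwards [Ioc_mem_nhdsGT zero_lt_one] with r hr
  rw [(hasDerivAt_sol hs hf hr.1).deriv]
  exact abs_sol'_le_of_le_one hs hfK hr.1 hr.2

lemma abs_le_mul_rpow_one_sub (hfK : ∀ t, 0 ≤ t → |f t| ≤ K * bubbleWeight s t)
    {g : ℝ → ℝ} {M : ℝ} (ht : 0 < t) (hg : |g t| ≤ M) (hM : 0 ≤ M) :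
    |t * g t * f t| ≤ M * K * t ^ (1 - s) := by
  have hK := nonneg_of_abs_le_mul_bubbleWeight hfK
  calc |t * g t * f t| = t * |g t| * |f t| := by rw [abs_mul, abs_mul, abs_of_pos ht]
    _ ≤ t * M * (K * t ^ (-s)) := by
        gcongr
        exact (hfK t ht.le).trans
          (mul_le_mul_of_nonneg_left (bubbleWeight_le_rpow_neg ht) hK)
    _ = M * K * t ^ (1 - s) := by rw [← self_mul_rpow_neg ht]; ring

lemma I₀_eq_add (hs : 0 < s) (hf : ContinuousOn f (Ici 0)) (hr : 1 ≤ r) :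
    I₀ s f r = I₀ s f 1 + ∫ t in (1 : ℝ)..r, t * z₀ s t * f t :=
  (intervalIntegral.integral_add_adjacent_intervals
    (intervalIntegrable_of_continuousOn_Ici (continuousOn_integrand₀ hs hf) le_rfl zero_le_one)
    (intervalIntegrable_of_continuousOn_Ici (continuousOn_integrand₀ hs hf) zero_le_one
      (zero_le_one.trans hr))).symm

lemma I₁_eq_add (hs : 0 < s) (hf : ContinuousOn f (Ici 0)) (hr : 1 ≤ r) :
    I₁ s f r = I₁ s f 1 + ∫ t in (1 : ℝ)..r, t * z₁ s t * f t :=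
  (intervalIntegral.integral_add_adjacent_intervals
    (intervalIntegrable_of_continuousOn_Ici (continuousOn_integrand₁ hs hf) le_rfl zero_le_one)
    (intervalIntegrable_of_continuousOn_Ici (continuousOn_integrand₁ hs hf) zero_le_one
      (zero_le_one.trans hr))).symm

lemma abs_I₀_le_of_one_le (hs : 0 < s) (hs₂ : s ≠ 2) (hf : ContinuousOn f (Ici 0))
    (hfK : ∀ t, 0 ≤ t → |f t| ≤ K * bubbleWeight s t) (hr : 1 ≤ r) :
    |I₀ s f r| ≤ K * (1 + (1 + r ^ (2 - s)) / |2 - s|) := by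
  have hK := nonneg_of_abs_le_mul_bubbleWeight hfK
  have h₁ : |I₀ s f 1| ≤ K := by simpa using abs_I₀_le hfK zero_lt_one
  have h₂ := abs_integral_le_of_abs_le_rpow (g := fun t => t * z₀ s t * f t) hs₂ hK hr
    fun t ht => by
      simpa only [one_mul] using abs_le_mul_rpow_one_sub hfK (zero_lt_one.trans ht.1)
        (abs_z₀_le_one (zero_le_one.trans ht.1.le)) zero_le_one
  rw [I₀_eq_add hs hf hr, mul_add, mul_one]
  exact (abs_add_le _ _).trans (add_le_add h₁ h₂)

lemma abs_I₁_le_of_one_le (hs : 0 < s) (hs₂ : s ≠ 2) (hf : ContinuousOn f (Ici 0))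
    (hfK : ∀ t, 0 ≤ t → |f t| ≤ K * bubbleWeight s t) (hr : 1 ≤ r) :
    |I₁ s f r| ≤ K * (s + 4) + (s * log r + 4) * K * ((1 + r ^ (2 - s)) / |2 - s|) := by
  have hK := nonneg_of_abs_le_mul_bubbleWeight hfK
  have hlog := log_nonneg hr
  have h₁ : |I₁ s f 1| ≤ K * (s + 4) := by simpa using abs_I₁_le_of_le_one hs hfK zero_lt_one le_rfl
  have h₂ := abs_integral_le_of_abs_le_rpow (g := fun t => t * z₁ s t * f t)
      (M := (s * log r + 4) * K) hs₂ (by positivity) hr fun t ht => by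
    have ht₀ : 0 < t := zero_lt_one.trans ht.1
    refine abs_le_mul_rpow_one_sub hfK ht₀ ((abs_z₁_le hs.le ht₀.le).trans ?_) (by positivity)
    rw [abs_of_nonneg (log_nonneg ht.1.le)]
    gcongr
    exact ht.2
  rw [I₁_eq_add hs hf hr]
  exact (abs_add_le _ _).trans (add_le_add h₁ h₂)

def solConst (s : ℝ) : ℝ := 4 * (s + 4) * (1 + 1 / |2 - s|) / s

lemma solConst_pos (hs : 0 < s) : 0 < solConst s := by unfold solConst; positivity

lemma abs_sol_le_of_one_le (hs : 0 < s) (hs₂ : s ≠ 2) (hf : ContinuousOn f (Ici 0))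
    (hfK : ∀ t, 0 ≤ t → |f t| ≤ K * bubbleWeight s t) (hr : 1 ≤ r) :
    |sol s f r| ≤ solConst s * K * ((1 + (1 + r) ^ (2 - s)) * log (2 + r)) := by
  have hK := nonneg_of_abs_le_mul_bubbleWeight hfK
  set Λ := log (2 + r)
  set P := 1 + (1 + r) ^ (2 - s)
  set a := 1 / |2 - s|
  have hΛ : 1 ≤ Λ := one_le_log_two_add hr
  have hP : 1 ≤ P := le_add_of_nonneg_right (rpow_nonneg (by linarith) _)
  have ha : 0 ≤ a := by positivity
  have hQ : (1 + r ^ (2 - s)) / |2 - s| ≤ 2 * a * P := by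
    rw [div_eq_mul_one_div, mul_comm]
    nlinarith [one_add_rpow_le_two_mul (2 - s) hr]
  have hlog : s * log r + 4 ≤ (s + 4) * Λ := by
    nlinarith [log_le_log (by linarith) (by linarith : r ≤ 2 + r), log_nonneg hr]
  have hz : |z₁ s r| ≤ (s + 4) * Λ := by
    rw [← abs_of_nonneg (log_nonneg hr)] at hlog
    exact (abs_z₁_le hs.le (by linarith)).trans hlog
  have hI₀ : |I₀ s f r| ≤ K * ((1 + 2 * a) * P) :=
    (abs_I₀_le_of_one_le hs hs₂ hf hfK hr).trans (by gcongr; nlinarith)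
  have hI₁ : |I₁ s f r| ≤ K * (s + 4) * ((1 + 2 * a) * Λ * P) := by
    refine (abs_I₁_le_of_one_le hs hs₂ hf hfK hr).trans ?_
    have h₁ : K * (s + 4) ≤ K * (s + 4) * (Λ * P) := le_mul_of_one_le_right (by positivity)
      (by nlinarith)
    have h₂ : (s * log r + 4) * K * ((1 + r ^ (2 - s)) / |2 - s|)
        ≤ (s + 4) * Λ * K * (2 * a * P) := by gcongr
    nlinarith
  calc |sol s f r| ≤ (|z₁ s r| * |I₀ s f r| + |I₁ s f r|) / s := abs_sol_le_div hs (by linarith)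
    _ ≤ ((s + 4) * Λ * (K * ((1 + 2 * a) * P)) + K * (s + 4) * ((1 + 2 * a) * Λ * P)) / s := by
        gcongr
    _ = 2 * (s + 4) * (1 + 2 * a) / s * K * (P * Λ) := by ring
    _ ≤ solConst s * K * (P * Λ) := by
        gcongr
        exact div_le_div_of_nonneg_right (by nlinarith) hs.le

theorem abs_sol_le_solConst_mul (hs : 0 < s) (hs₂ : s ≠ 2) (hf : ContinuousOn f (Ici 0))
    (hfK : ∀ t, 0 ≤ t → |f t| ≤ K * bubbleWeight s t) (hr : 0 < r) :
    |sol s f r| ≤ solConst s * K * ((1 + (1 + r) ^ (2 - s)) * log (2 + r)) := by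
  rcases le_or_gt r 1 with hr₁ | hr₁
  · have hK := nonneg_of_abs_le_mul_bubbleWeight hfK
    have hweight : 1 / 2 ≤ (1 + (1 + r) ^ (2 - s)) * log (2 + r) := by
      have hlog : log 2 ≤ log (2 + r) := log_le_log two_pos (by linarith)
      have := rpow_nonneg (by linarith : (0 : ℝ) ≤ 1 + r) (2 - s)
      nlinarith [log_two_gt_d9]
    calc |sol s f r| ≤ 2 * K * (s + 4) / s * r := abs_sol_le_of_le_one hs hfK hr hr₁
      _ ≤ 4 * (s + 4) * 1 / s * K * (1 / 2) := by
          rw [show 4 * (s + 4) * 1 / s * K * (1 / 2) = 2 * K * (s + 4) / s * 1 by ring]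
          gcongr
      _ ≤ solConst s * K * ((1 + (1 + r) ^ (2 - s)) * log (2 + r)) := by
          unfold solConst
          gcongr
          exact le_add_of_nonneg_right (by positivity)
  · exact abs_sol_le_of_one_le hs hs₂ hf hfK hr₁.le

/-! ### The second-order forcing -/

variable {α : ℝ}

/-- The forcing divided by `ε²`, in a form that is visibly continuous on `[0, ∞)` (unlike the one
with `r^(2α)`). -/
def secondOrderForcing (α B₁ B₂ r : ℝ) : ℝ :=
  -(r ^ (2 + 2 * α)) / (1 + r ^ (2 + 2 * α)) ^ 2 *
    (B₁ + B₂ * ((1 + r ^ (2 + 2 * α))⁻¹ ^ 2 / (4 * α ^ 2)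
      - (1 + r ^ (2 + 2 * α))⁻¹ / (4 * α * (1 + α))))

lemma rpow_two_add_two_mul (hr : 0 < r) : r ^ (2 + 2 * α) = r ^ (2 * α) * r ^ 2 := by
  rw [rpow_add hr, rpow_two, mul_comm]

lemma potential_two_add_two_mul (hr : 0 < r) :
    8 * (1 + α) ^ 2 * r ^ (2 * α) / (1 + r ^ (2 + 2 * α)) ^ 2 = potential (2 + 2 * α) r := by
  have := (one_add_rpow_pos (s := 2 + 2 * α) hr.le).ne'
  unfold potential
  rw [rpow_two_add_two_mul hr]
  field_simp
  ring

lemma eq_sq_mul_secondOrderForcing (hα : -1 < α) (hα₀ : α ≠ 0) (B₁ B₂ ε : ℝ) (hr : 0 < r) :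
    -(ε ^ 2) * r ^ (2 * α) / (1 + r ^ (2 + 2 * α)) ^ 2
        * (B₁ * r ^ 2 + B₂ * (4 * (1 + α) ^ 2 * gfun α r ^ 2 + gfun α r * r))
      = ε ^ 2 * secondOrderForcing α B₁ B₂ r := by
  have := (one_add_rpow_pos (s := 2 + 2 * α) hr.le).ne'
  have : 1 + α ≠ 0 := by linarith
  unfold secondOrderForcing gfun
  rw [rpow_two_add_two_mul hr] at *
  field_simp
  ring

lemma continuousOn_secondOrderForcing (hα : -1 < α) (B₁ B₂ : ℝ) :
    ContinuousOn (secondOrderForcing α B₁ B₂) (Ici 0) := by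
  have hpow := (continuous_rpow_const (q := 2 + 2 * α) (by linarith)).continuousOn (s := Ici 0)
  have hw := continuousOn_const.add hpow (f := fun _ => (1 : ℝ))
  have hinv := hw.inv₀ fun r hr => (one_add_rpow_pos hr).ne'
  exact (hpow.neg.mul ((hw.pow 2).inv₀ fun r hr => pow_ne_zero 2 (one_add_rpow_pos hr).ne')).mul
    (continuousOn_const.add (continuousOn_const.mul
      (((hinv.pow 2).div_const _).sub (hinv.div_const _))))

lemma exists_pos_abs_secondOrderForcing_le (α B₁ B₂ : ℝ) : ∃ K, 0 < K ∧ ∀ r, 0 ≤ r →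
    |secondOrderForcing α B₁ B₂ r| ≤ K * bubbleWeight (2 + 2 * α) r := by
  refine ⟨|B₁| + |B₂| * (1 / |4 * α ^ 2| + 1 / |4 * α * (1 + α)|) + 1, by positivity,
    fun r hr => ?_⟩
  set x := (1 + r ^ (2 + 2 * α))⁻¹
  have hx₀ : 0 ≤ x := inv_nonneg.mpr (one_add_rpow_pos hr).le
  have hx₁ : x ≤ 1 := inv_le_one_of_one_le₀ (le_add_of_nonneg_right (rpow_nonneg hr _))
  have hdiv {c y : ℝ} (hy₀ : 0 ≤ y) (hy₁ : y ≤ 1) : |y / c| ≤ 1 / |c| := by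
    rw [abs_div, abs_of_nonneg hy₀]
    gcongr
  have hE : |B₁ + B₂ * (x ^ 2 / (4 * α ^ 2) - x / (4 * α * (1 + α)))|
      ≤ |B₁| + |B₂| * (1 / |4 * α ^ 2| + 1 / |4 * α * (1 + α)|) + 1 := by
    refine (abs_add_le _ _).trans (le_add_of_le_of_nonneg (add_le_add_right ?_ _) zero_le_one)
    rw [abs_mul]
    gcongr
    exact (abs_sub _ _).trans (add_le_add (hdiv (by positivity) (pow_le_one₀ hx₀ hx₁))
      (hdiv hx₀ hx₁))
  rw [secondOrderForcing, bubbleWeight, abs_mul, neg_div, abs_neg, abs_of_nonneg (by positivity),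
    mul_comm]
  exact mul_le_mul_of_nonneg_right hE (by positivity)

end LinearizedLiouville

end

open LinearizedLiouville

theorem stmt10 (α : ℝ) (hα : α > -1) (hα0 : α ≠ 0) (B₁ B₂ : ℝ) :
    ∃ C : ℝ, 0 < C ∧
      ∀ ε : ℝ, 0 < ε → ε < 1 →
        ∃ c : ℝ → ℝ, ContDiffOn ℝ 2 c (Set.Ioo 0 ε⁻¹) ∧
          (∀ r : ℝ, 0 < r → r < ε⁻¹ →
            deriv (deriv c) r + deriv c r / r
              + 8 * (1 + α) ^ 2 * r ^ (2 * α) / (1 + r ^ (2 + 2 * α)) ^ 2 * c r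
            = -(ε ^ 2) * r ^ (2 * α) / (1 + r ^ (2 + 2 * α)) ^ 2
                * (B₁ * r ^ 2
                    + B₂ * (4 * (1 + α) ^ 2 * gfun α r ^ 2 + gfun α r * r))) ∧
          Tendsto c (nhdsWithin 0 (Set.Ioi 0)) (nhds 0) ∧
          Tendsto (deriv c) (nhdsWithin 0 (Set.Ioi 0)) (nhds 0) ∧
          (∀ r : ℝ, 0 < r → r < ε⁻¹ →
            |c r| ≤ C * ε ^ 2 * (1 + (1 + r) ^ (-(2 * α))) * Real.log (2 + r)) := by
  have hs : 0 < 2 + 2 * α := by linarith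
  have hs₂ : 2 + 2 * α ≠ 2 := fun h => hα0 (by linarith)
  obtain ⟨K, hK, hforcing⟩ := exists_pos_abs_secondOrderForcing_le α B₁ B₂
  refine ⟨solConst (2 + 2 * α) * K, mul_pos (solConst_pos hs) hK, fun ε _ _ => ?_⟩
  set f := fun r => ε ^ 2 * secondOrderForcing α B₁ B₂ r
  have hf : ContinuousOn f (Ici 0) :=
    continuousOn_const.mul (continuousOn_secondOrderForcing hα B₁ B₂)
  have hfK : ∀ t, 0 ≤ t →
      |f t| ≤ ε ^ 2 * K * bubbleWeight (2 + 2 * α) t := fun t ht => by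
    rw [abs_mul, abs_of_nonneg (sq_nonneg ε), mul_assoc]
    exact mul_le_mul_of_nonneg_left (hforcing t ht) (sq_nonneg ε)
  refine ⟨sol (2 + 2 * α) f, (contDiffOn_sol hs hf).mono Ioo_subset_Ioi_self, fun r hr _ => ?_,
    tendsto_sol_zero hs hfK, tendsto_deriv_sol_zero hs hf hfK, fun r hr _ => ?_⟩
  · rw [potential_two_add_two_mul hr, eq_sq_mul_secondOrderForcing hα hα0 B₁ B₂ ε hr]
    exact sol_ode hs hf hr
  · have h := abs_sol_le_solConst_mul hs hs₂ hf hfK hr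
    rw [show (2 : ℝ) - (2 + 2 * α) = -(2 * α) by ring] at h
    exact h.trans_eq (by ring)
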